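/- arXiv:1310.2449 — 4 statements merged into one kernel-verified Lean document; each statement's English description precedes it below -/
import Mathlib

section
/- For all n ≥ 0, the Motzkin number m_n equals Σ_{k=0}^{⌊n/2⌋} C_k · binomial(n, 2k), where C_k is the k-th Catalan number. -/
open Finset

/-- The Motzkin numbers. -/
def motzkin : ℕ → ℕ
  | 0 => 1
  | n + 1 => motzkin n + ∑ i : Fin n, motzkin i * motzkin (n - 1 - i)
decreasing_by
  · exact Nat.lt_succ_self n
  · exact Nat.lt_succ_of_lt i.is_lt
  · have := i.is_lt; omega

/-!
Write `T n = ∑ₖ Cₖ * (n choose 2k)`; it suffices to show that `T` satisfies the Motzkin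
recurrence. Pascal's rule `(n+2 choose 2k) = (n+1 choose 2k) + (n+1 choose 2k-1)` gives
`T (n+2) = T (n+1) + ∑ₖ Cₖ₊₁ * (n+1 choose 2k+1)`. Expanding `Cₖ₊₁ = ∑_{a+b=k} Cₐ C_b` and
using the upper Vandermonde identity `∑_{i+j=n} (i choose p) (j choose q) = (n+1 choose p+q+1)`
turns the last sum into `∑_{i+j=n} T i * T j`.
-/

theorem motzkin_zero : motzkin 0 = 1 := by
  rw [motzkin]

theorem motzkin_one : motzkin 1 = 1 := by
  rw [motzkin, motzkin_zero]
  rfl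

theorem motzkin_succ_succ (n : ℕ) :
    motzkin (n + 2) = motzkin (n + 1) + ∑ ij ∈ antidiagonal n, motzkin ij.1 * motzkin ij.2 := by
  rw [motzkin, Fin.sum_univ_eq_sum_range (fun i => motzkin i * motzkin (n + 1 - 1 - i)),
    Nat.sum_antidiagonal_eq_sum_range_succ (fun i j => motzkin i * motzkin j)]
  rfl

theorem eq_motzkin_of_recurrence {f : ℕ → ℕ} (h0 : f 0 = 1) (h1 : f 1 = 1)
    (h : ∀ n, f (n + 2) = f (n + 1) + ∑ ij ∈ antidiagonal n, f ij.1 * f ij.2) (n : ℕ) :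
    f n = motzkin n := by
  induction n using Nat.strong_induction_on with
  | _ n ih =>
    match n with
    | 0 => rw [h0, motzkin_zero]
    | 1 => rw [h1, motzkin_one]
    | n + 2 =>
      rw [h, motzkin_succ_succ, ih (n + 1) (by omega)]
      refine congrArg _ (sum_congr rfl fun ij hij => ?_)
      have := mem_antidiagonal.1 hij
      rw [ih ij.1 (by omega), ih ij.2 (by omega)]

theorem sum_antidiagonal_choose_mul_choose (m p q : ℕ) :
    ∑ ij ∈ antidiagonal m, ij.1.choose p * ij.2.choose q = (m + 1).choose (p + q + 1) := by
  induction m generalizing p with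
  | zero => cases p <;> simp [Nat.choose_succ_succ, Nat.choose_eq_zero_of_lt]
  | succ m ih =>
    rw [Nat.sum_antidiagonal_succ]
    cases p with
    | zero =>
      have ih0 := ih 0
      simp only [Nat.choose_zero_right, one_mul, zero_add] at ih0 ⊢
      rw [ih0, Nat.choose_succ_succ' (m + 1), add_comm]
    | succ p =>
      simp only [Nat.choose_succ_succ' _ p, add_mul, sum_add_distrib, ih, Nat.choose_zero_succ,
        zero_mul, zero_add]
      rw [add_right_comm p 1 q, Nat.choose_succ_succ' (m + 1) (p + q + 1)]

theorem sum_range_sum_range_eq_sum_range_sum_antidiagonal {M : Type*} [AddCommMonoid M] {N : ℕ}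
    (f : ℕ → ℕ → M) (hf : ∀ a b, N ≤ a + b → f a b = 0) :
    ∑ a ∈ range N, ∑ b ∈ range N, f a b = ∑ k ∈ range N, ∑ ij ∈ antidiagonal k, f ij.1 ij.2 := by
  rw [sum_congr rfl fun k _ => Nat.sum_antidiagonal_eq_sum_range_succ f k, sum_range_diag_flip]
  refine sum_congr rfl fun a ha => (sum_subset (range_subset_range.2 (Nat.sub_le N a))
    fun b _ hb => hf a b ?_).symm
  simp only [mem_range] at ha hb
  omega

def catalanChooseSum (n : ℕ) : ℕ :=
  ∑ k ∈ range (n / 2 + 1), catalan k * n.choose (2 * k)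

theorem sum_range_catalan_mul_choose {n N : ℕ} (h : n / 2 < N) :
    ∑ k ∈ range N, catalan k * n.choose (2 * k) = catalanChooseSum n := by
  refine (sum_subset (range_subset_range.2 h) fun k _ hk => ?_).symm
  rw [mem_range] at hk
  rw [Nat.choose_eq_zero_of_lt (by omega), mul_zero]

theorem catalanChooseSum_zero : catalanChooseSum 0 = 1 := by
  simp [catalanChooseSum]

theorem catalanChooseSum_one : catalanChooseSum 1 = 1 := by
  simp [catalanChooseSum]

theorem catalanChooseSum_succ_succ_eq_add_sum (m : ℕ) :
    catalanChooseSum (m + 2) = catalanChooseSum (m + 1) +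
      ∑ k ∈ range (m + 1), catalan (k + 1) * (m + 1).choose (2 * k + 1) := by
  rw [← sum_range_catalan_mul_choose (N := m + 2) (by omega),
    ← sum_range_catalan_mul_choose (N := m + 2) (by omega),
    sum_range_succ' (fun k => catalan k * (m + 2).choose (2 * k)),
    sum_range_succ' (fun k => catalan k * (m + 1).choose (2 * k))]
  have pascal (k : ℕ) : (m + 2).choose (2 * (k + 1)) =
      (m + 1).choose (2 * k + 1) + (m + 1).choose (2 * (k + 1)) :=
    Nat.choose_succ_succ' (m + 1) (2 * k + 1)
  simp only [pascal, mul_add (catalan _), sum_add_distrib, mul_zero, Nat.choose_zero_right]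
  ring

theorem sum_range_catalan_succ_mul_choose (m : ℕ) :
    ∑ k ∈ range (m + 1), catalan (k + 1) * (m + 1).choose (2 * k + 1) =
      ∑ ij ∈ antidiagonal m, catalanChooseSum ij.1 * catalanChooseSum ij.2 := by
  calc ∑ k ∈ range (m + 1), catalan (k + 1) * (m + 1).choose (2 * k + 1)
      = ∑ k ∈ range (m + 1), ∑ ab ∈ antidiagonal k,
          catalan ab.1 * catalan ab.2 * (m + 1).choose (2 * (ab.1 + ab.2) + 1) := by
        refine sum_congr rfl fun k _ => ?_
        rw [catalan_succ', sum_mul]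
        exact sum_congr rfl fun ab hab => by rw [mem_antidiagonal.1 hab]
    _ = ∑ a ∈ range (m + 1), ∑ b ∈ range (m + 1),
          catalan a * catalan b * (m + 1).choose (2 * (a + b) + 1) := by
        refine (sum_range_sum_range_eq_sum_range_sum_antidiagonal
          (fun a b => catalan a * catalan b * (m + 1).choose (2 * (a + b) + 1)) fun a b h => ?_).symm
        rw [Nat.choose_eq_zero_of_lt (by omega), mul_zero]
    _ = ∑ a ∈ range (m + 1), ∑ b ∈ range (m + 1), catalan a * catalan b *
          ∑ ij ∈ antidiagonal m, ij.1.choose (2 * a) * ij.2.choose (2 * b) := by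
        simp only [sum_antidiagonal_choose_mul_choose, mul_add]
    _ = ∑ ij ∈ antidiagonal m, (∑ a ∈ range (m + 1), catalan a * ij.1.choose (2 * a)) *
          ∑ b ∈ range (m + 1), catalan b * ij.2.choose (2 * b) := by
        simp only [sum_mul_sum]
        simp only [mul_sum]
        symm
        rw [sum_comm]
        refine sum_congr rfl fun a _ => ?_
        rw [sum_comm]
        refine sum_congr rfl fun b _ => sum_congr rfl fun ij _ => ?_
        ring
    _ = ∑ ij ∈ antidiagonal m, catalanChooseSum ij.1 * catalanChooseSum ij.2 := by
        refine sum_congr rfl fun ij hij => ?_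
        have := mem_antidiagonal.1 hij
        rw [sum_range_catalan_mul_choose (by omega), sum_range_catalan_mul_choose (by omega)]

theorem catalanChooseSum_succ_succ (m : ℕ) :
    catalanChooseSum (m + 2) = catalanChooseSum (m + 1) +
      ∑ ij ∈ antidiagonal m, catalanChooseSum ij.1 * catalanChooseSum ij.2 := by
  rw [catalanChooseSum_succ_succ_eq_add_sum, sum_range_catalan_succ_mul_choose]

/-- For all `n ≥ 0`, `m n = ∑_{k=0}^{⌊n/2⌋} C_k ⬝ (n choose 2k)`. -/
theorem motzkin_eq_sum_catalan_choose (n : ℕ) :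
    motzkin n = ∑ k ∈ Finset.range (n / 2 + 1), catalan k * n.choose (2 * k) :=
  (eq_motzkin_of_recurrence catalanChooseSum_zero catalanChooseSum_one
    catalanChooseSum_succ_succ n).symm
end

section
/- The generating function M^b(z) = Σ m^b_n z^n of the Grand Motzkin numbers (central trinomial coefficients) satisfies M^b(z) = 1/(1 − z − 2z^2·M(z)) in the sense that (1 − z − 2z^2·M(z))·M^b(z) = 1 as formal power series, where M(z) is the Motzkin generating function. -/
open PowerSeries Polynomial

/-- The `n`-th Grand Motzkin number: the coefficient of `x^n` in `(1+x+x^2)^n`. -/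
noncomputable def grandMotzkin (n : ℕ) : ℤ :=
  ((1 + Polynomial.X + Polynomial.X ^ 2 : Polynomial ℤ) ^ n).coeff n

/-!
From the Motzkin equation, `A = 1 - z - 2z²M` satisfies `A² = 1 - 2z - 3z²`, so `2AA' = -2(1 + 3z)`.
The central trinomial coefficients `aₙ` satisfy `(n+2)aₙ₊₂ = (2n+3)aₙ₊₁ + 3(n+1)aₙ`, which follows
from the symmetry of `(1+x+x²)ⁿ`, the rule `(1+x+x²)ⁿ⁺¹ = (1+x+x²)(1+x+x²)ⁿ` and differentiation;
equivalently `(1 - 2z - 3z²)·M^b' = (1 + 3z)·M^b`. Together these give `A·(A·M^b)' = 0`, so `A·M^b`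
is the constant `1`.
-/

theorem Polynomial.reflect_pow {R : Type*} [CommSemiring R] {f : R[X]} {N : ℕ}
    (hf : f.natDegree ≤ N) (n : ℕ) : reflect (n * N) (f ^ n) = reflect N f ^ n := by
  induction n with
  | zero => simp
  | succ n ih =>
    rw [pow_succ, pow_succ, Nat.succ_mul, reflect_mul _ _ (natDegree_pow_le_of_le n hf) hf, ih]

@[simp]
theorem PowerSeries.coeff_ofNat_mul {R : Type*} [Semiring R] (k n : ℕ) [n.AtLeastTwo]
    (f : R⟦X⟧) : coeff k ((no_index (OfNat.ofNat n : R⟦X⟧)) * f) = OfNat.ofNat n * coeff k f := by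
  rw [← map_ofNat PowerSeries.C, PowerSeries.coeff_C_mul]

@[simp]
theorem PowerSeries.derivative_ofNat {R : Type*} [CommSemiring R] (n : ℕ) [n.AtLeastTwo] :
    d⁄dX R (no_index (OfNat.ofNat n : R⟦X⟧)) = 0 := by
  rw [← map_ofNat PowerSeries.C, PowerSeries.derivative_C]

theorem PowerSeries.derivative_mul_eq_zero_of_two_mul_sq_mul_derivative {R : Type*} [CommRing R]
    [IsDomain R] [CharZero R] {A f : R⟦X⟧} (hA : A ≠ 0)
    (h : 2 * A ^ 2 * d⁄dX R f = -d⁄dX R (A ^ 2) * f) : d⁄dX R (A * f) = 0 := by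
  have h2 : (2 : R⟦X⟧) ≠ 0 := fun h2 =>
    two_ne_zero (by simpa [map_ofNat] using congrArg constantCoeff h2 : (2 : R) = 0)
  have key : 2 * A * d⁄dX R (A * f) = 0 := by
    rw [PowerSeries.derivative_pow] at h
    rw [Derivation.leibniz, smul_eq_mul, smul_eq_mul]
    norm_num at h
    linear_combination h
  exact (mul_eq_zero.mp key).resolve_left (mul_ne_zero h2 hA)

namespace GrandMotzkin

noncomputable def trinomial : ℤ[X] := 1 + Polynomial.X + Polynomial.X ^ 2

theorem natDegree_trinomial : trinomial.natDegree = 2 := by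
  unfold trinomial
  compute_degree!

theorem reflect_trinomial : reflect 2 trinomial = trinomial := by
  have hX : reflect 2 (Polynomial.X : ℤ[X]) = Polynomial.X := by
    simpa using reflect_monomial (R := ℤ) 2 1
  rw [trinomial, reflect_add, reflect_add, reflect_one, hX, reflect_monomial, revAt_le le_rfl,
    Nat.sub_self, pow_zero]
  ring

theorem reflect_trinomial_pow (n : ℕ) : reflect (n * 2) (trinomial ^ n) = trinomial ^ n := by
  rw [reflect_pow natDegree_trinomial.le, reflect_trinomial]

theorem coeff_trinomial_pow_add_eq_sub (n k : ℕ) (hk : k ≤ n) :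
    (trinomial ^ n).coeff (n + k) = (trinomial ^ n).coeff (n - k) := by
  have h := congrArg (Polynomial.coeff · (n - k)) (reflect_trinomial_pow n)
  simp only [coeff_reflect, revAt_le (show n - k ≤ n * 2 by omega)] at h
  rw [← h]
  congr 1
  omega

theorem coeff_trinomial_pow_succ_add_two (n k : ℕ) :
    (trinomial ^ (n + 1)).coeff (k + 2) =
      (trinomial ^ n).coeff (k + 2) + (trinomial ^ n).coeff (k + 1) + (trinomial ^ n).coeff k := by
  rw [pow_succ, trinomial, mul_add, mul_add, mul_one, coeff_add, coeff_add, Polynomial.coeff_mul_X,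
    Polynomial.coeff_mul_X_pow]

theorem mul_coeff_trinomial_pow_succ_add_two (n j : ℕ) :
    ((j : ℤ) + 2) * (trinomial ^ (n + 1)).coeff (j + 2) =
      ((n : ℤ) + 1) * ((trinomial ^ n).coeff (j + 1) + 2 * (trinomial ^ n).coeff j) := by
  have hd : derivative (trinomial ^ (n + 1)) =
      Polynomial.C ((n : ℤ) + 1) * (trinomial ^ n + 2 * (trinomial ^ n * Polynomial.X)) := by
    rw [Polynomial.derivative_pow]
    simp [trinomial]
    ring
  have h := congrArg (Polynomial.coeff · (j + 1)) hd
  simp only [Polynomial.coeff_derivative, Polynomial.coeff_C_mul, Polynomial.coeff_add,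
    Polynomial.coeff_ofNat_mul, Polynomial.coeff_mul_X] at h
  push_cast at h
  linear_combination h

theorem grandMotzkin_eq_coeff (n : ℕ) : grandMotzkin n = (trinomial ^ n).coeff n := rfl

theorem grandMotzkin_zero : grandMotzkin 0 = 1 := by simp [grandMotzkin]

theorem grandMotzkin_one : grandMotzkin 1 = 1 := by simp [grandMotzkin, Polynomial.coeff_one]

theorem grandMotzkin_succ_succ (m : ℕ) :
    grandMotzkin (m + 2) = grandMotzkin (m + 1) + 2 * (trinomial ^ (m + 1)).coeff m := by
  have h := coeff_trinomial_pow_succ_add_two (m + 1) m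
  rw [coeff_trinomial_pow_add_eq_sub (m + 1) 1 le_add_self, Nat.add_sub_cancel] at h
  simp only [grandMotzkin_eq_coeff]
  linear_combination h

theorem mul_coeff_trinomial_pow_below_center (m : ℕ) :
    ((m : ℤ) + 3) * (trinomial ^ (m + 2)).coeff (m + 1) =
      ((m : ℤ) + 2) * ((trinomial ^ (m + 1)).coeff m + 2 * grandMotzkin (m + 1)) := by
  have h := mul_coeff_trinomial_pow_succ_add_two (m + 1) (m + 1)
  rw [coeff_trinomial_pow_add_eq_sub (m + 2) 1 le_add_self,
    coeff_trinomial_pow_add_eq_sub (m + 1) 1 le_add_self, Nat.add_sub_cancel] at h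
  rw [grandMotzkin_eq_coeff]
  push_cast at h
  linear_combination h

theorem grandMotzkin_recurrence (m : ℕ) :
    ((m : ℤ) + 2) * grandMotzkin (m + 2) =
      (2 * m + 3) * grandMotzkin (m + 1) + 3 * (m + 1) * grandMotzkin m := by
  rcases m with _ | k
  · have h := grandMotzkin_succ_succ 0
    have h0 : trinomial.coeff 0 = 1 := by simp [trinomial]
    norm_num [h, h0, grandMotzkin_zero, grandMotzkin_one]
  · have h1 := grandMotzkin_succ_succ (k + 1)
    have h2 := grandMotzkin_succ_succ k
    have h3 := mul_coeff_trinomial_pow_below_center k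
    push_cast
    linear_combination ((k : ℤ) + 3) * h1 - ((k : ℤ) + 2) * h2 + 2 * h3

noncomputable def grandMotzkinSeries : ℚ⟦X⟧ := PowerSeries.mk fun n => (grandMotzkin n : ℚ)

theorem grandMotzkinSeries_ode :
    (1 - 2 * PowerSeries.X - 3 * PowerSeries.X ^ 2) * d⁄dX ℚ grandMotzkinSeries =
      (1 + 3 * PowerSeries.X) * grandMotzkinSeries := by
  have hrec (m : ℕ) := congrArg (Int.cast : ℤ → ℚ) (grandMotzkin_recurrence m)
  push_cast at hrec
  ext n
  rcases n with _ | _ | m <;>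
    simp only [grandMotzkinSeries, sub_mul, add_mul, one_mul, mul_assoc, map_sub, map_add,
      PowerSeries.coeff_ofNat_mul, PowerSeries.coeff_X_pow_mul', PowerSeries.coeff_succ_X_mul,
      PowerSeries.coeff_zero_X_mul, PowerSeries.coeff_derivative, PowerSeries.coeff_mk] <;>
    simp
  · rw [grandMotzkin_zero, grandMotzkin_one]
  · linear_combination hrec 0
  · have h := hrec (m + 1)
    push_cast at h
    linear_combination h

end GrandMotzkin

/-- The Grand Motzkin generating function `M^b(z)` satisfies
`(1 − z − 2z^2·M(z))·M^b(z) = 1`, where `M(z)` is the Motzkin generating function,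
i.e. the unique formal power series with `M = 1 + z·M + z^2·M^2`. -/
theorem grandMotzkin_gf_eq (M : PowerSeries ℚ)
    (hM : M = 1 + PowerSeries.X * M + PowerSeries.X ^ 2 * M ^ 2) :
    let Mb : PowerSeries ℚ := PowerSeries.mk fun n => (grandMotzkin n : ℚ)
    (1 - PowerSeries.X - 2 * PowerSeries.X ^ 2 * M) * Mb = 1 := by
  show _ * GrandMotzkin.grandMotzkinSeries = 1
  set A : ℚ⟦X⟧ := 1 - PowerSeries.X - 2 * PowerSeries.X ^ 2 * M
  have hA0 : constantCoeff A = 1 := by simp [A]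
  have hAsq : A ^ 2 = 1 - 2 * PowerSeries.X - 3 * PowerSeries.X ^ 2 := by
    linear_combination (-4 * PowerSeries.X ^ 2 : ℚ⟦X⟧) * hM
  have hode : 2 * A ^ 2 * d⁄dX ℚ GrandMotzkin.grandMotzkinSeries =
      -d⁄dX ℚ (A ^ 2) * GrandMotzkin.grandMotzkinSeries := by
    have hdP : d⁄dX ℚ (1 - 2 * PowerSeries.X - 3 * PowerSeries.X ^ 2) =
        -2 * (1 + 3 * PowerSeries.X) := by
      simp
      ring
    rw [hAsq, hdP]
    linear_combination 2 * GrandMotzkin.grandMotzkinSeries_ode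
  refine derivative.ext ?_ ?_
  · rw [derivative_mul_eq_zero_of_two_mul_sq_mul_derivative ?_ hode, PowerSeries.derivative_one]
    exact fun h => by simp [h] at hA0
  · simp [hA0, GrandMotzkin.grandMotzkinSeries, GrandMotzkin.grandMotzkin_zero]
end

section
/- As formal power series over ℚ, the Grand Motzkin generating function satisfies (1 − 2z − 3z^2)·M^b(z)^2 = 1, i.e., M^b(z) = 1/√(1 − 2z − 3z^2). -/
open PowerSeries Polynomial

namespace Polynomial

variable {R : Type*}

theorem coeff_X_mul_derivative [Semiring R] (p : R[X]) (n : ℕ) :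
    (X * derivative p).coeff n = n * p.coeff n := by
  cases n with
  | zero => simp
  | succ n => rw [coeff_X_mul, coeff_derivative, ← Nat.cast_succ, (Nat.cast_commute _ _).eq]

theorem coeff_one_add_X_add_X_sq_mul [Semiring R] (p : R[X]) (k : ℕ) :
    ((1 + X + X ^ 2) * p).coeff (k + 2) = p.coeff (k + 2) + p.coeff (k + 1) + p.coeff k := by
  rw [add_mul, add_mul, one_mul, coeff_add, coeff_add, coeff_X_pow_mul, coeff_X_mul]

theorem mul_derivative_pow [CommSemiring R] (p : R[X]) (n : ℕ) :
    p * derivative (p ^ n) = C (n : R) * derivative p * p ^ n := by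
  cases n with
  | zero => simp
  | succ n => rw [derivative_pow_succ, pow_succ]; push_cast; ring

end Polynomial

namespace PowerSeries

variable {R : Type*}

@[simp]
theorem derivative_ofNat_s16 [CommSemiring R] (n : ℕ) [n.AtLeastTwo] :
    d⁄dX R (ofNat(n) : R⟦X⟧) = 0 :=
  Derivation.map_natCast _ n

@[simp]
theorem coeff_ofNat_mul_s16 [Semiring R] {a k : ℕ} [a.AtLeastTwo] (f : R⟦X⟧) :
    coeff k ((ofNat(a) : R⟦X⟧) * f) = ofNat(a) * coeff k f :=
  coeff_C_mul k f _

theorem mul_sq_eq_one_of_derivative [CommRing R] [IsAddTorsionFree R]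
    {q f : R⟦X⟧} (h : 2 * q * d⁄dX R f + d⁄dX R q * f = 0)
    (h0 : constantCoeff q * constantCoeff f ^ 2 = 1) : q * f ^ 2 = 1 := by
  refine derivative.ext ?_ (by simpa using h0)
  rw [derivative_one, Derivation.leibniz, Derivation.leibniz_pow, smul_eq_mul, smul_eq_mul,
    smul_eq_mul]
  linear_combination f * h

end PowerSeries

noncomputable def trinomialCoeff (n k : ℕ) : ℤ :=
  ((1 + Polynomial.X + Polynomial.X ^ 2 : ℤ[X]) ^ n).coeff k

theorem grandMotzkin_eq_trinomialCoeff (n : ℕ) : grandMotzkin n = trinomialCoeff n n := rfl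

theorem trinomialCoeff_succ (n k : ℕ) :
    trinomialCoeff (n + 1) (k + 2)
      = trinomialCoeff n (k + 2) + trinomialCoeff n (k + 1) + trinomialCoeff n k := by
  rw [trinomialCoeff, pow_succ', coeff_one_add_X_add_X_sq_mul]; rfl

-- the coefficient of `x^(k+2)` in `X · T · (Tⁿ)' = n · X · T' · Tⁿ`
theorem trinomialCoeff_euler (n k : ℕ) :
    (k + 2 : ℤ) * trinomialCoeff n (k + 2) + (k + 1) * trinomialCoeff n (k + 1)
        + k * trinomialCoeff n k
      = n * trinomialCoeff n (k + 1) + 2 * n * trinomialCoeff n k := by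
  set T : ℤ[X] := 1 + Polynomial.X + Polynomial.X ^ 2
  have hT : derivative T = 1 + 2 * Polynomial.X := by simp [T]
  have h := congrArg (fun p => (Polynomial.X * p).coeff (k + 2)) (mul_derivative_pow T n)
  simp only [hT] at h
  rw [mul_left_comm, coeff_one_add_X_add_X_sq_mul, coeff_X_mul_derivative,
    coeff_X_mul_derivative, coeff_X_mul_derivative,
    show Polynomial.X * (Polynomial.C (n : ℤ) * (1 + 2 * Polynomial.X) * T ^ n)
      = Polynomial.C (n : ℤ) * (Polynomial.X * T ^ n)
        + Polynomial.C (2 * n : ℤ) * (Polynomial.X ^ 2 * T ^ n) by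
      simp only [map_mul, map_ofNat]; ring,
    Polynomial.coeff_add, Polynomial.coeff_C_mul, Polynomial.coeff_C_mul, Polynomial.coeff_X_mul,
    Polynomial.coeff_X_pow_mul] at h
  push_cast at h
  exact h

theorem trinomialCoeff_succ_symm (n : ℕ) :
    trinomialCoeff (n + 1) (n + 2) = trinomialCoeff (n + 1) n := by
  have h := trinomialCoeff_euler (n + 1) n
  push_cast at h
  exact mul_left_cancel₀ (by positivity : (n + 2 : ℤ) ≠ 0) (by linear_combination h)

theorem mul_trinomialCoeff_succ_add_two (n : ℕ) :
    (n + 2 : ℤ) * trinomialCoeff (n + 1) (n + 2)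
      = (n + 1) * (2 * grandMotzkin n + trinomialCoeff n (n + 1)) := by
  rw [grandMotzkin_eq_trinomialCoeff]
  linear_combination (n + 2 : ℤ) * trinomialCoeff_succ n n + trinomialCoeff_euler n n

@[simp]
theorem grandMotzkin_zero : grandMotzkin 0 = 1 := by simp [grandMotzkin]

@[simp]
theorem grandMotzkin_one : grandMotzkin 1 = 1 := by
  simp [grandMotzkin, Polynomial.coeff_X, Polynomial.coeff_one]

theorem grandMotzkin_succ (n : ℕ) :
    grandMotzkin (n + 1) = grandMotzkin n + 2 * trinomialCoeff n (n + 1) := by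
  cases n with
  | zero => simp [trinomialCoeff, Polynomial.coeff_one]
  | succ n =>
    simp only [grandMotzkin_eq_trinomialCoeff]
    linear_combination trinomialCoeff_succ (n + 1) n - trinomialCoeff_succ_symm n

theorem grandMotzkin_recurrence (n : ℕ) :
    (n + 2 : ℤ) * grandMotzkin (n + 2)
      = (2 * n + 3) * grandMotzkin (n + 1) + 3 * (n + 1) * grandMotzkin n := by
  linear_combination (n + 2 : ℤ) * grandMotzkin_succ (n + 1)
    + 2 * mul_trinomialCoeff_succ_add_two n - (n + 1 : ℤ) * grandMotzkin_succ n

noncomputable def grandMotzkinSeries : ℚ⟦X⟧ := PowerSeries.mk fun n => (grandMotzkin n : ℚ)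

theorem grandMotzkinSeries_derivative :
    (1 - 2 * PowerSeries.X - 3 * PowerSeries.X ^ 2) * d⁄dX ℚ grandMotzkinSeries
      = (1 + 3 * PowerSeries.X) * grandMotzkinSeries := by
  ext n
  rcases n with _ | _ | n <;>
    simp [grandMotzkinSeries, sub_mul, add_mul, mul_assoc, PowerSeries.coeff_derivative,
      PowerSeries.coeff_zero_X_mul, PowerSeries.coeff_X_pow_mul',
      -PowerSeries.coeff_zero_eq_constantCoeff]
  · have h := congrArg (Int.cast (R := ℚ)) (grandMotzkin_recurrence 0)
    push_cast [grandMotzkin_zero, grandMotzkin_one] at h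
    linear_combination h
  · have h := congrArg (Int.cast (R := ℚ)) (grandMotzkin_recurrence (n + 1))
    push_cast at h
    linear_combination h

/-- As formal power series over `ℚ`, `(1 − 2z − 3z^2)·M^b(z)^2 = 1`,
i.e. `M^b(z) = 1/√(1 − 2z − 3z^2)`. -/
theorem grandMotzkin_gf_sq :
    let Mb : PowerSeries ℚ := PowerSeries.mk fun n => (grandMotzkin n : ℚ)
    (1 - 2 * PowerSeries.X - 3 * PowerSeries.X ^ 2) * Mb ^ 2 = 1 := by
  intro Mb
  have hq : d⁄dX ℚ (1 - 2 * PowerSeries.X - 3 * PowerSeries.X ^ 2 : ℚ⟦X⟧)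
      = -2 - 6 * PowerSeries.X := by
    simp; ring
  refine PowerSeries.mul_sq_eq_one_of_derivative (f := grandMotzkinSeries) ?_
    (by simp [grandMotzkinSeries])
  rw [hq]
  linear_combination 2 * grandMotzkinSeries_derivative
end

section
/- As formal power series, the Motzkin generating function satisfies M(z) = Σ_{n≥0} C_n · z^{2n}/(1−z)^{2n+1}, where C_n are the Catalan numbers; equivalently (1−z)·M(z) = C(z^2/(1−z)^2) where C is the Catalan generating function. -/
open PowerSeries

/-! Substituting `U = X²/(1-X)²` into `C = 1 + X·C²` shows that `(1-X)⁻¹·C(U)` satisfies the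
Motzkin equation, and that equation has only one solution: for two solutions `M`, `N` we have
`(M - N)·(1 - X - X²(M+N)) = 0`, where the second factor is a unit. Multiplication by
`(1-X)⁻¹` passes through the coefficientwise finite expansion `C(U) = ∑ Cₙ Uⁿ`. -/

namespace PowerSeries

section Subst

variable {R S : Type*} [CommRing R] [CommRing S] [Algebra R S]

theorem coeff_mul_subst {a : S⟦X⟧} (ha : HasSubst a) (g : S⟦X⟧) (f : R⟦X⟧) (e : ℕ) :
    coeff e (g * f.subst a) = ∑ᶠ d, coeff d f • coeff e (g * a ^ d) := by
  have hfin (p : ℕ × ℕ) :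
      (fun d ↦ coeff p.1 g * (coeff d f • coeff p.2 (a ^ d))).HasFiniteSupport :=
    (coeff_subst_finite' ha f p.2).subset
      (Function.support_mul_subset_right (fun _ ↦ coeff p.1 g) _)
  simp_rw [coeff_mul, coeff_subst' ha, mul_finsum' _ _ (coeff_subst_finite' ha f _)]
  rw [sum_finsum_comm _ _ fun p _ ↦ hfin p]
  simp_rw [Finset.smul_sum, mul_smul_comm]

theorem subst_map_catalanSeries_sq_mul_add_one {a : S⟦X⟧} (ha : HasSubst a) :
    ((catalanSeries.map (Nat.castRingHom S)).subst a) ^ 2 * a + 1 =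
      (catalanSeries.map (Nat.castRingHom S)).subst a := by
  simpa [← coe_substAlgHom ha, substAlgHom_X ha] using
    congrArg (fun φ ↦ substAlgHom ha (φ.map (Nat.castRingHom S))) catalanSeries_sq_mul_X_add_one

end Subst

theorem eq_of_eq_one_add_X_mul_add_X_sq_mul_sq {R : Type*} [CommRing R] {M N : R⟦X⟧}
    (hM : M = 1 + X * M + X ^ 2 * M ^ 2) (hN : N = 1 + X * N + X ^ 2 * N ^ 2) : M = N := by
  have hunit : IsUnit (1 - X - X ^ 2 * (M + N)) :=
    isUnit_iff_constantCoeff.mpr (by simp)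
  have hprod : (M - N) * (1 - X - X ^ 2 * (M + N)) = 0 := by
    linear_combination hM - hN
  exact sub_eq_zero.mp (hunit.mul_left_eq_zero.mp hprod)

variable {K : Type*} [Field K]

protected theorem inv_pow (φ : K⟦X⟧) (n : ℕ) : (φ ^ n)⁻¹ = φ⁻¹ ^ n := by
  induction n with
  | zero => simp
  | succ n ih => rw [pow_succ, PowerSeries.mul_inv_rev, ih, pow_succ']

theorem eq_inv_one_sub_X_mul_subst_catalanSeries {M : K⟦X⟧}
    (hM : M = 1 + X * M + X ^ 2 * M ^ 2) :
    M = (1 - X)⁻¹ *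
      (catalanSeries.map (Nat.castRingHom K)).subst (X ^ 2 * (1 - X)⁻¹ ^ 2 : K⟦X⟧) := by
  set A : K⟦X⟧ := (1 - X)⁻¹
  set c := (catalanSeries.map (Nat.castRingHom K)).subst (X ^ 2 * A ^ 2)
  have hA : (1 - X) * A = 1 := PowerSeries.mul_inv_cancel _ (by simp)
  have hc : c ^ 2 * (X ^ 2 * A ^ 2) + 1 = c :=
    subst_map_catalanSeries_sq_mul_add_one (HasSubst.of_constantCoeff_zero' (by simp))
  exact eq_of_eq_one_add_X_mul_add_X_sq_mul_sq hM (by linear_combination c * hA - hc)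

end PowerSeries

/-- The Motzkin generating function `M(z)` (the unique formal power series with
`M = 1 + z·M + z^2·M^2`) satisfies `M(z) = ∑_{n≥0} C_n · z^(2n)/(1−z)^(2n+1)`,
where `C_n` are the Catalan numbers.  The (coefficientwise finite) infinite sum
is expressed via `finsum`, and division is the inverse of the unit `(1−z)^(2n+1)`
in `ℚ⟦z⟧`. -/
theorem motzkin_gf_eq_sum_catalan (M : PowerSeries ℚ)
    (hM : M = 1 + X * M + X ^ 2 * M ^ 2) (t : ℕ) :
    (PowerSeries.coeff (R := ℚ) t) M =
      ∑ᶠ n : ℕ,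
        (catalan n : ℚ) *
          (PowerSeries.coeff (R := ℚ) t) (X ^ (2 * n) * ((1 - X) ^ (2 * n + 1))⁻¹) := by
  have hterm (n : ℕ) : (1 - X)⁻¹ * (X ^ 2 * (1 - X)⁻¹ ^ 2) ^ n =
      (X ^ (2 * n) * ((1 - X) ^ (2 * n + 1))⁻¹ : ℚ⟦X⟧) := by
    rw [PowerSeries.inv_pow, mul_pow, ← pow_mul, ← pow_mul, pow_succ']
    ring
  rw [eq_inv_one_sub_X_mul_subst_catalanSeries hM,
    coeff_mul_subst (HasSubst.of_constantCoeff_zero' (by simp))]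
  refine finsum_congr fun n ↦ ?_
  rw [coeff_map, catalanSeries_coeff, eq_natCast, smul_eq_mul, hterm]
end
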